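/- arXiv:1906.04789 — 3 statements merged into one kernel-verified Lean document; each statement's English description precedes it below -/
import Mathlib

section
/- Let K be a field (or integral domain) and let a₁, a₂, b₂, b₃, c₁, c₃ ∈ K all be nonzero. If a₁b₂ = b₃c₁, c₁a₂ = b₂c₃, and a₁c₃ = a₂b₃, then there exists ε ∈ {1, −1} such that b₂ = ε·c₁, b₃ = ε·a₁, c₃ = ε·a₂, and c₁ = ε·b₂. -/
/-- If `a₁,a₂,b₂,b₃,c₁,c₃` are nonzero elements of a field satisfying
`a₁b₂ = b₃c₁`, `c₁a₂ = b₂c₃` and `a₁c₃ = a₂b₃`, then there is `ε ∈ {1,-1}`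
with `b₂ = εc₁`, `b₃ = εa₁`, `c₃ = εa₂` and `c₁ = εb₂`. -/
theorem stmt_1 (K : Type*) [Field K] (a₁ a₂ b₂ b₃ c₁ c₃ : K)
    (ha₁ : a₁ ≠ 0) (ha₂ : a₂ ≠ 0) (hb₂ : b₂ ≠ 0) (hb₃ : b₃ ≠ 0)
    (hc₁ : c₁ ≠ 0) (hc₃ : c₃ ≠ 0)
    (h1 : a₁ * b₂ = b₃ * c₁) (h2 : c₁ * a₂ = b₂ * c₃) (h3 : a₁ * c₃ = a₂ * b₃) :
    ∃ ε : K, (ε = 1 ∨ ε = -1) ∧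
      b₂ = ε * c₁ ∧ b₃ = ε * a₁ ∧ c₃ = ε * a₂ ∧ c₁ = ε * b₂ := by
  have key1 : b₂ * a₂ = c₃ * c₁ :=
    mul_left_cancel₀ ha₁ (by linear_combination a₂ * h1 - c₁ * h3)
  have key2 : a₂ * a₂ = c₃ * c₃ :=
    mul_left_cancel₀ hb₂ (by linear_combination a₂ * key1 + c₃ * h2)
  rcases mul_self_eq_mul_self_iff.mp key2 with h | h
  · rw [h] at h2 h3
    have e1 : b₂ = c₁ := (mul_right_cancel₀ hc₃ h2).symm
    have e2 : b₃ = a₁ := mul_left_cancel₀ hc₃ (by linear_combination -h3)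
    exact ⟨1, Or.inl rfl, by rw [one_mul]; exact e1, by rw [one_mul]; exact e2,
      by rw [one_mul, h], by rw [one_mul, e1]⟩
  · rw [h] at h2 h3
    have e1 : b₂ = -c₁ := mul_right_cancel₀ hc₃ (by linear_combination -h2)
    have e2 : b₃ = -a₁ := mul_right_cancel₀ hc₃ (by linear_combination h3)
    exact ⟨-1, Or.inr rfl, by rw [e1]; ring, by rw [e2]; ring,
      by rw [h]; ring, by rw [e1]; ring⟩
end

section
/- Let G be a group, H ≤ G a subgroup, and r : G → G a group homomorphism with r(G) = H and r(h) = h for all h ∈ H (a retraction onto H). Fix a prime p and define the Frattini-type series Φ¹(G) = G, Φ^{n+1}(G) = (Φⁿ(G))^p [Φⁿ(G), Φⁿ(G)], where K^p denotes the subgroup generated by p-th powers of elements of K. Then Φⁿ(H) = H ∩ Φⁿ(G) for all n ≥ 1. -/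
/-- The Frattini-type series: `Φ¹(G) = G` (index `0` here) and
`Φ^{n+1}(G) = Φⁿ(G)^p [Φⁿ(G), Φⁿ(G)]`. -/
def phiSeries (p : ℕ) (G : Type*) [Group G] : ℕ → Subgroup G
  | 0 => ⊤
  | n + 1 =>
      Subgroup.closure ((fun x : G => x ^ p) '' (phiSeries p G n : Set G)) ⊔
        ⁅phiSeries p G n, phiSeries p G n⁆

/-!
Both `Φⁿ(H) ≤ H ∩ Φⁿ(G)` and the converse come from functoriality of `Φⁿ`: every homomorphism
`f : G →* G'` maps `Φⁿ(G)` into `Φⁿ(G')`. Applied to the inclusion `H ↪ G` this gives `≤`;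
applied to the retraction `G → H`, which fixes `H ∩ Φⁿ(G)` pointwise, it gives `≥`.
-/

/-- `K^p [K, K]`. -/
def phiStep (p : ℕ) {G : Type*} [Group G] (K : Subgroup G) : Subgroup G :=
  Subgroup.closure ((fun x : G => x ^ p) '' (K : Set G)) ⊔ ⁅K, K⁆

section phiStep

variable {G G' : Type*} [Group G] [Group G'] (p : ℕ)

theorem phiSeries_succ (n : ℕ) : phiSeries p G (n + 1) = phiStep p (phiSeries p G n) := rfl

theorem phiStep_map (f : G →* G') (K : Subgroup G) :
    (phiStep p K).map f = phiStep p (K.map f) := by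
  unfold phiStep
  rw [Subgroup.map_sup, MonoidHom.map_closure, Subgroup.map_commutator, Subgroup.coe_map,
    Set.image_image, Set.image_image]
  simp only [map_pow]

theorem phiStep_mono {K L : Subgroup G} (h : K ≤ L) : phiStep p K ≤ phiStep p L :=
  sup_le_sup (Subgroup.closure_mono (Set.image_mono h)) (Subgroup.commutator_mono h h)

theorem map_phiSeries_le (f : G →* G') (n : ℕ) :
    (phiSeries p G n).map f ≤ phiSeries p G' n := by
  induction n with
  | zero => exact le_top
  | succ n ih =>
    rw [phiSeries_succ, phiStep_map]
    exact phiStep_mono p ih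

end phiStep

theorem map_subtype_phiSeries_of_retraction {G : Type*} [Group G] (p : ℕ) {H : Subgroup G}
    (ρ : G →* H) (hρ : ∀ h : H, ρ h = h) (n : ℕ) :
    (phiSeries p H n).map H.subtype = H ⊓ phiSeries p G n := by
  refine le_antisymm (le_inf (Subgroup.map_subtype_le _) (map_phiSeries_le p H.subtype n)) ?_
  rintro g ⟨hgH, hgΦ⟩
  have hρg : ρ g ∈ phiSeries p H n := map_phiSeries_le p ρ n ⟨g, hgΦ, rfl⟩
  exact ⟨ρ g, hρg, congrArg Subtype.val (hρ ⟨g, hgH⟩)⟩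

theorem stmt_5_general (G : Type*) [Group G] (H : Subgroup G) (p : ℕ)
    (r : G →* G) (hrange : r.range = H) (hfix : ∀ h ∈ H, r h = h) :
    ∀ n : ℕ, (phiSeries p H n).map H.subtype = H ⊓ phiSeries p G n := by
  have hrH : ∀ g, r g ∈ H := fun g => hrange ▸ ⟨g, rfl⟩
  exact map_subtype_phiSeries_of_retraction p (r.codRestrict H hrH)
    (fun h => Subtype.ext (hfix h h.2))

/-- If `r : G → G` is a retraction onto a subgroup `H` (i.e. `r(G) = H` and
`r` fixes `H` pointwise), then `Φⁿ(H) = H ∩ Φⁿ(G)` for all `n`. -/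
theorem stmt_5 (G : Type*) [Group G] (H : Subgroup G) (p : ℕ) (hp : p.Prime)
    (r : G →* G) (hrange : r.range = H) (hfix : ∀ h ∈ H, r h = h) :
    ∀ n : ℕ, (phiSeries p H n).map H.subtype = H ⊓ phiSeries p G n :=
  stmt_5_general G H p r hrange hfix
end

section
/- Let G be a simple graph on 2n vertices (n ≥ 1) that is triangle-free and has exactly n² edges. Then G is isomorphic to the complete bipartite graph K_{n,n}. -/
/-! Mantel's theorem is Turán's theorem for `r = 2`: a triangle-free graph with as many edges as
the Turán graph `T(2n, 2)` is Turán-maximal, hence isomorphic to `T(2n, 2)`, and `T(2n, 2)` is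
`K_{n,n}` with its two sides interleaved by parity. -/

open Finset Fintype

namespace SimpleGraph

variable {V : Type*} [Fintype V] {G : SimpleGraph V} [DecidableRel G.Adj] {r t : ℕ}

theorem isTuranMaximal_of_card_edgeFinset_eq (cf : G.CliqueFree (r + 1))
    (h : #G.edgeFinset = #(turanGraph (card V) r).edgeFinset) : G.IsTuranMaximal r :=
  ⟨cf, fun _ _ cfH => h ▸ card_edgeFinset_turanGraph ▸ cfH.card_edgeFinset_le⟩

def completeBipartiteGraph.completeEquipartiteGraph :
    completeBipartiteGraph (Fin t) (Fin t) ≃g completeEquipartiteGraph 2 t where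
  toEquiv := (Equiv.boolProdEquivSum (Fin t)).symm.trans (finTwoEquiv.symm.prodCongr (.refl _))
  map_rel_iff' := by rintro (a | a) (b | b) <;> simp [finTwoEquiv]

def completeBipartiteGraph.turanGraph :
    completeBipartiteGraph (Fin t) (Fin t) ≃g turanGraph (2 * t) 2 :=
  completeBipartiteGraph.completeEquipartiteGraph.trans completeEquipartiteGraph.turanGraph

theorem card_edgeFinset_turanGraph_two_mul :
    #(turanGraph (2 * t) 2).edgeFinset = t ^ 2 := by
  rw [← completeEquipartiteGraph.turanGraph.card_edgeFinset_eq,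
    card_edgeFinset_completeEquipartiteGraph, Nat.choose_self, one_mul]

end SimpleGraph

open SimpleGraph

theorem stmt_11_general (n : ℕ) (G : SimpleGraph (Fin (2 * n)))
    [DecidableRel G.Adj] (htf : G.CliqueFree 3)
    (hcard : G.edgeFinset.card = n ^ 2) :
    Nonempty (G ≃g completeBipartiteGraph (Fin n) (Fin n)) := by
  have hmax : G.IsTuranMaximal 2 := isTuranMaximal_of_card_edgeFinset_eq htf <| by
    rw [Fintype.card_fin, card_edgeFinset_turanGraph_two_mul, hcard]
  obtain ⟨f⟩ := hmax.nonempty_iso_turanGraph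
  rw [Fintype.card_fin] at f
  exact ⟨f.trans completeBipartiteGraph.turanGraph.symm⟩

/-- Equality case of Mantel's theorem: a triangle-free simple graph on `2n`
vertices with `n²` edges is isomorphic to `K_{n,n}`. -/
theorem stmt_11 (n : ℕ) (hn : 1 ≤ n) (G : SimpleGraph (Fin (2 * n)))
    [DecidableRel G.Adj] (htf : G.CliqueFree 3)
    (hcard : G.edgeFinset.card = n ^ 2) :
    Nonempty (G ≃g completeBipartiteGraph (Fin n) (Fin n)) :=
  stmt_11_general n G htf hcard
end
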